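/- For every prime p, ∑_{k=1}^{p-1} (-1)^k B_k ≡ 1 (mod p). -/

import Mathlib

/-- The Bell numbers: `bell n` is the number of partitions of an `n`-element set,
determined by `bell 0 = 1` and `bell (n+1) = ∑_{k=0}^{n} C(n,k) * bell k`. -/
def bell : ℕ → ℕ
  | 0 => 1
  | n + 1 => ∑ k ∈ (Finset.range (n + 1)).attach, n.choose k * bell k
decreasing_by exact Finset.mem_range.mp k.2

/-!
Let `φ` be the linear functional on polynomials with `φ (X ^ n) = B_n`. The Bell recursion says
`φ (X * f) = φ (f (X + 1))`, so `φ` sends every falling factorial `X (X - 1) ⋯ (X - k + 1)` to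
`φ 1 = 1`. Over `𝔽_p` the falling factorial of length `p` is `X ^ p - X`, whence
`B_p - B_1 ≡ 1`, i.e. `B_p ≡ 2 (mod p)` (Touchard). On the other hand the recursion gives
`B_p = ∑_{k<p} C(p-1,k) B_k`, and `C(p-1,k) ≡ (-1)^k (mod p)`, so
`2 ≡ 1 + ∑_{k=1}^{p-1} (-1)^k B_k`.
-/

open Polynomial Finset

theorem bell_succ (n : ℕ) : bell (n + 1) = ∑ k ∈ range (n + 1), n.choose k * bell k := by
  rw [bell]
  exact sum_attach _ fun k => n.choose k * bell k

theorem bell_zero : bell 0 = 1 := by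
  rw [bell]

theorem bell_one : bell 1 = 1 := by
  simp [bell_succ, bell_zero]

section BellFunctional

variable (R : Type*) [CommRing R]

noncomputable def bellFunctional : R[X] →ₗ[R] R :=
  lsum fun n => (bell n : R) • LinearMap.id

variable {R}

theorem bellFunctional_monomial (n : ℕ) (a : R) :
    bellFunctional R (monomial n a) = a * bell n := by
  simp [bellFunctional, sum_monomial_index, mul_comm]

theorem bellFunctional_X_pow (n : ℕ) : bellFunctional R (X ^ n) = bell n := by
  rw [← monomial_one_right_eq_X_pow, bellFunctional_monomial, one_mul]

theorem bellFunctional_X_mul_X_pow (n : ℕ) :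
    bellFunctional R (X * X ^ n) = bellFunctional R ((X + 1) ^ n) := by
  rw [← pow_succ', bellFunctional_X_pow, bell_succ, add_pow]
  simp only [one_pow, mul_one, map_sum, Nat.cast_sum, Nat.cast_mul]
  refine sum_congr rfl fun k _ => ?_
  rw [← C_eq_natCast, mul_comm (X ^ k), ← smul_eq_C_mul, map_smul, bellFunctional_X_pow,
    smul_eq_mul, mul_comm]

theorem bellFunctional_X_mul (f : R[X]) :
    bellFunctional R (X * f) = bellFunctional R (f.comp (X + 1)) := by
  induction f using Polynomial.induction_on' with
  | add f g hf hg => rw [mul_add, map_add, hf, hg, add_comp, map_add]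
  | monomial n a =>
    rw [← C_mul_X_pow_eq_monomial, mul_left_comm, ← smul_eq_C_mul, map_smul, mul_comp, C_comp,
      X_pow_comp, ← smul_eq_C_mul, map_smul, bellFunctional_X_mul_X_pow]

theorem bellFunctional_descPochhammer_mul (k : ℕ) (f : R[X]) :
    bellFunctional R (descPochhammer R k * f) = bellFunctional R (f.comp (X + (k : R[X]))) := by
  induction k generalizing f with
  | zero => simp
  | succ k ih =>
    have hshift : (X - 1 : R[X]).comp (X + 1) = X := by simp
    rw [descPochhammer_succ_left, mul_assoc, bellFunctional_X_mul, mul_comp, comp_assoc, hshift,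
      comp_X, ih, comp_assoc, add_comp, X_comp, one_comp, Nat.cast_succ, add_assoc]

theorem bellFunctional_descPochhammer (k : ℕ) : bellFunctional R (descPochhammer R k) = 1 := by
  rw [← mul_one (descPochhammer R k), bellFunctional_descPochhammer_mul, one_comp, ← pow_zero X,
    bellFunctional_X_pow, bell_zero, Nat.cast_one]

end BellFunctional

theorem descPochhammer_eq_prod_range (R : Type*) [CommRing R] (n : ℕ) :
    descPochhammer R n = ∏ i ∈ range n, (X - C (i : R)) := by
  induction n with
  | zero => simp
  | succ n ih => rw [descPochhammer_succ_right, ih, prod_range_succ, map_natCast]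

theorem FiniteField.prod_univ_X_sub_C (K : Type*) [Field K] [Fintype K] :
    ∏ a : K, (X - C a) = X ^ Fintype.card K - X := by
  have hmonic : (X ^ Fintype.card K - X : K[X]).Monic :=
    monic_X_pow_sub (by rw [degree_X]; exact_mod_cast Fintype.one_lt_card)
  have hroots := roots_X_pow_card_sub_X K
  rw [← prod_multiset_X_sub_C_of_monic_of_roots_card_eq hmonic, hroots]
  · rfl
  · rw [hroots, X_pow_card_sub_X_natDegree_eq K Fintype.one_lt_card]; rfl

theorem ZMod.descPochhammer_eq_X_pow_sub_X (p : ℕ) [Fact p.Prime] :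
    descPochhammer (ZMod p) p = X ^ p - X := by
  have hprod := FiniteField.prod_univ_X_sub_C (ZMod p)
  rw [ZMod.card] at hprod
  rw [descPochhammer_eq_prod_range, ← hprod]
  exact prod_nbij' (↑) ZMod.val (fun _ _ => mem_univ _) (fun a _ => mem_range.2 a.val_lt)
    (fun _ hi => ZMod.val_natCast_of_lt (mem_range.1 hi)) (fun a _ => ZMod.natCast_zmod_val a)
    (fun _ _ => rfl)

theorem cast_bell_prime_eq_two (p : ℕ) [Fact p.Prime] : (bell p : ZMod p) = 2 := by
  have h := bellFunctional_descPochhammer (R := ZMod p) p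
  rw [ZMod.descPochhammer_eq_X_pow_sub_X, map_sub, bellFunctional_X_pow, ← pow_one X,
    bellFunctional_X_pow, bell_one, Nat.cast_one] at h
  linear_combination h

theorem cast_choose_pred_prime {p : ℕ} (hp : p.Prime) {k : ℕ} (hk : k < p) :
    ((p - 1).choose k : ZMod p) = (-1) ^ k := by
  induction k with
  | zero => simp
  | succ k ih =>
    have hpascal : p.choose (k + 1) = (p - 1).choose k + (p - 1).choose (k + 1) := by
      rw [← Nat.choose_succ_succ', Nat.sub_add_cancel hp.one_le]
    have hvanish : (p.choose (k + 1) : ZMod p) = 0 :=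
      (ZMod.natCast_eq_zero_iff _ _).2 (hp.dvd_choose_self k.succ_ne_zero hk)
    rw [hpascal, Nat.cast_add, ih (by omega)] at hvanish
    linear_combination hvanish

/-- For every prime `p`, `∑_{k=1}^{p-1} (-1)^k B_k ≡ 1 (mod p)`. -/
theorem alternating_bell_sum (p : ℕ) (hp : p.Prime) :
    ∑ k ∈ Finset.Icc 1 (p - 1), (-1 : ZMod p) ^ k * (bell k : ZMod p) = 1 := by
  have : Fact p.Prime := ⟨hp⟩
  have hrec : bell p = ∑ k ∈ range p, (p - 1).choose k * bell k := by
    simpa [Nat.sub_add_cancel hp.one_le] using bell_succ (p - 1)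
  have hrange : range p = insert 0 (Icc 1 (p - 1)) := by
    ext k
    simp only [mem_range, mem_insert, mem_Icc]
    have := hp.pos
    omega
  have htwo :
      (2 : ZMod p) = 1 + ∑ k ∈ Icc 1 (p - 1), (-1 : ZMod p) ^ k * (bell k : ZMod p) := by
    rw [← cast_bell_prime_eq_two, hrec, hrange, sum_insert (by simp), Nat.choose_zero_right,
      bell_zero]
    push_cast
    refine congrArg _ (sum_congr rfl fun k hk => ?_)
    rw [cast_choose_pred_prime hp (by grind)]
  linear_combination -htwo
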